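/- Longest Processing Time (LPT) is value-monotone: for any m ≥ 2 and input sequences x, y of length n of positive reals with x_i ≥ y_i for all i, the vector of bin sums of LPT(x, m) dominates the vector of bin sums of LPT(y, m); in particular both the maximum and minimum bin sums weakly increase. -/

import Mathlib

open scoped Classical

/-- The bin chosen by List Scheduling: the smallest-index bin with minimal current sum. -/
noncomputable def lsIndex {m : ℕ} (hm : 0 < m) (v : Fin m → ℝ) : Fin m :=
  (Finset.univ.filter fun i => ∀ j, v i ≤ v j).min' (by
    obtain ⟨i, -, hi⟩ := Finset.exists_min_image Finset.univ v ⟨⟨0, hm⟩, Finset.mem_univ _⟩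
    exact ⟨i, Finset.mem_filter.mpr ⟨Finset.mem_univ _, fun j => hi j (Finset.mem_univ _)⟩⟩)

/-- One step of List Scheduling: place `x` into the chosen bin. -/
noncomputable def lsStep {m : ℕ} (hm : 0 < m) (v : Fin m → ℝ) (x : ℝ) : Fin m → ℝ :=
  Function.update v (lsIndex hm v) (v (lsIndex hm v) + x)

/-- The vector of bin sums after List Scheduling processes the list `xs` into `m` bins. -/
noncomputable def lsSums {m : ℕ} (hm : 0 < m) (xs : List ℝ) : Fin m → ℝ :=
  xs.foldl (lsStep hm) (fun _ => 0)

/-- `s` dominates `t` iff some permutation `π` satisfies `s (π i) ≥ t i` for all `i`. -/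
def Dominates {m : ℕ} (s t : Fin m → ℝ) : Prop :=
  ∃ π : Equiv.Perm (Fin m), ∀ i, t i ≤ s (π i)


/-- Sort a list of reals in nonincreasing order. -/
noncomputable def sortDesc (xs : List ℝ) : List ℝ :=
  xs.mergeSort (fun a b => decide (b ≤ a))

/-- The bin sums produced by the Longest Processing Time (LPT) algorithm:
sort the inputs in nonincreasing order, then run List Scheduling. -/
noncomputable def lptSums {m : ℕ} (hm : 0 < m) (xs : List ℝ) : Fin m → ℝ :=
  lsSums hm (sortDesc xs)

/-!
Both runs of LPT place their `k`-th largest item into a bin of minimal current sum, and the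
`k`-th largest item of `x` is at least the `k`-th largest item of `y`. So it suffices that
domination of bin-sum vectors survives one step in which a minimal bin of the dominating
vector receives the larger item and a minimal bin of the dominated one the smaller item:
re-matching the bins so that the two receiving bins are paired does this.
-/

section Sorting

variable {α : Type*}

theorem Multiset.rel_coe_of_forall₂ {β : Type*} {r : α → β → Prop} {t : List α} {s : List β}
    (h : List.Forall₂ r t s) : Multiset.Rel r (t : Multiset α) s := by
  induction h with
  | nil => exact Multiset.Rel.zero
  | cons hab _ ih => exact Multiset.Rel.cons hab ih

variable [Preorder α]

theorem Multiset.rel_le_of_rel_le_cons_cons {a b : α} {t s : Multiset α}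
    (hb : ∀ d ∈ t, d ≤ b) (h : Multiset.Rel (· ≤ ·) (b ::ₘ t) (a ::ₘ s)) :
    Multiset.Rel (· ≤ ·) t s := by
  obtain ⟨d, t₀, -, ht₀s, hbt⟩ := Multiset.rel_cons_right.mp h
  rcases Multiset.cons_eq_cons.mp hbt with ⟨rfl, rfl⟩ | ⟨-, u, rfl, rfl⟩
  · exact ht₀s
  · -- `b` is matched to some `e` in `s`; hand `e` to `d ≤ b` instead.
    obtain ⟨e, s₀, hbe, hus₀, rfl⟩ := Multiset.rel_cons_left.mp ht₀s
    exact Multiset.Rel.cons ((hb d (Multiset.mem_cons_self d u)).trans hbe) hus₀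

theorem List.forall₂_le_of_rel_le_of_pairwise_ge {t s : List α}
    (ht : t.Pairwise (· ≥ ·)) (hs : s.Pairwise (· ≥ ·))
    (h : Multiset.Rel (· ≤ ·) (t : Multiset α) s) : List.Forall₂ (· ≤ ·) t s := by
  induction t generalizing s with
  | nil => simpa using h
  | cons b t ih =>
    cases s with
    | nil => simp at h
    | cons a s =>
      rw [← Multiset.cons_coe, ← Multiset.cons_coe] at h
      rw [List.pairwise_cons] at ht hs
      obtain ⟨c, s', hbc, -, hs_eq⟩ := Multiset.rel_cons_left.mp h
      have hca : c ≤ a := by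
        have hc : c ∈ a :: s := by
          rw [← Multiset.mem_coe, ← Multiset.cons_coe, hs_eq]
          exact Multiset.mem_cons_self c s'
        rcases List.mem_cons.mp hc with rfl | hc
        · exact le_rfl
        · exact hs.1 c hc
      have htail : Multiset.Rel (· ≤ ·) (t : Multiset α) s :=
        Multiset.rel_le_of_rel_le_cons_cons ht.1 h
      exact List.Forall₂.cons (hbc.trans hca) (ih ht.2 hs.2 htail)

end Sorting

theorem forall₂_sortDesc_of_forall₂ {ys xs : List ℝ} (h : List.Forall₂ (· ≤ ·) ys xs) :
    List.Forall₂ (· ≤ ·) (sortDesc ys) (sortDesc xs) := by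
  refine List.forall₂_le_of_rel_le_of_pairwise_ge List.sortedGE_mergeSort.pairwise
    List.sortedGE_mergeSort.pairwise ?_
  rw [sortDesc, sortDesc, Multiset.coe_eq_coe.mpr (List.mergeSort_perm ys _),
    Multiset.coe_eq_coe.mpr (List.mergeSort_perm xs _)]
  exact Multiset.rel_coe_of_forall₂ h

theorem lsIndex_le {m : ℕ} (hm : 0 < m) (v : Fin m → ℝ) (k : Fin m) :
    v (lsIndex hm v) ≤ v k :=
  (Finset.mem_filter.mp (Finset.min'_mem (Finset.univ.filter fun i => ∀ j, v i ≤ v j) _)).2 k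

namespace Dominates

variable {m : ℕ} {v w : Fin m → ℝ}

theorem refl (v : Fin m → ℝ) : Dominates v v :=
  ⟨1, fun _ => le_rfl⟩

theorem exists_perm_apply_eq (h : Dominates v w) {i j : Fin m} (hi : ∀ k, v i ≤ v k)
    (hj : ∀ k, w j ≤ w k) :
    ∃ σ : Equiv.Perm (Fin m), (∀ k, w k ≤ v (σ k)) ∧ σ j = i := by
  obtain ⟨π, hπ⟩ := h
  refine ⟨Equiv.swap i (π j) * π, fun k => ?_, by simp⟩
  by_cases hkj : k = j
  · subst hkj
    simpa using (hj (π.symm i)).trans (by simpa using hπ (π.symm i))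
  by_cases hk : π k = i
  · simpa [hk] using (hπ k).trans (hk ▸ hi (π j))
  · have : π k ≠ π j := fun e => hkj (π.injective e)
    simpa [Equiv.swap_apply_of_ne_of_ne hk this] using hπ k

theorem update_add (h : Dominates v w) {i j : Fin m} (hi : ∀ k, v i ≤ v k)
    (hj : ∀ k, w j ≤ w k) {a b : ℝ} (hba : b ≤ a) :
    Dominates (Function.update v i (v i + a)) (Function.update w j (w j + b)) := by
  obtain ⟨σ, hσ, hσj⟩ := h.exists_perm_apply_eq hi hj
  refine ⟨σ, fun k => ?_⟩
  by_cases hk : k = j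
  · subst hk
    simp only [Function.update_self, hσj]
    linarith [hσj ▸ hσ k]
  · have : σ k ≠ i := hσj ▸ fun e => hk (σ.injective e)
    simpa [Function.update_of_ne hk, Function.update_of_ne this] using hσ k

theorem lsStep (hm : 0 < m) (h : Dominates v w) {a b : ℝ} (hba : b ≤ a) :
    Dominates (_root_.lsStep hm v a) (_root_.lsStep hm w b) :=
  h.update_add (lsIndex_le hm v) (lsIndex_le hm w) hba

theorem foldl_lsStep (hm : 0 < m) {xs ys : List ℝ} (hxy : List.Forall₂ (· ≤ ·) ys xs)
    (h : Dominates v w) :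
    Dominates (xs.foldl (_root_.lsStep hm) v) (ys.foldl (_root_.lsStep hm) w) := by
  induction hxy generalizing v w with
  | nil => exact h
  | cons hba _ ih => exact ih (h.lsStep hm hba)

theorem sup'_le_sup' (h : Dominates v w) (hne : (Finset.univ : Finset (Fin m)).Nonempty) :
    Finset.univ.sup' hne w ≤ Finset.univ.sup' hne v := by
  obtain ⟨π, hπ⟩ := h
  exact Finset.sup'_le _ _ fun k _ => (hπ k).trans (Finset.le_sup' v (Finset.mem_univ _))

theorem inf'_le_inf' (h : Dominates v w) (hne : (Finset.univ : Finset (Fin m)).Nonempty) :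
    Finset.univ.inf' hne w ≤ Finset.univ.inf' hne v := by
  obtain ⟨π, hπ⟩ := h
  refine Finset.le_inf' _ _ fun k _ => ?_
  calc Finset.univ.inf' hne w ≤ w (π.symm k) := Finset.inf'_le w (Finset.mem_univ _)
    _ ≤ v k := by simpa using hπ (π.symm k)

end Dominates

theorem dominates_lptSums {m n : ℕ} (hm : 0 < m) {x y : Fin n → ℝ} (hxy : ∀ i, y i ≤ x i) :
    Dominates (lptSums hm (List.ofFn x)) (lptSums hm (List.ofFn y)) := by
  have hofFn : List.Forall₂ (· ≤ ·) (List.ofFn y) (List.ofFn x) :=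
    List.forall₂_iff_get.mpr ⟨by simp, fun i _ _ => by simpa using hxy _⟩
  exact Dominates.foldl_lsStep hm (forall₂_sortDesc_of_forall₂ hofFn) (Dominates.refl _)

/-- LPT is value-monotone: if every input weakly increases, the output bin-sum vector
dominates the old one; in particular both the maximum and the minimum bin sums weakly
increase. -/
theorem lpt_value_monotone {m n : ℕ} (hm : 2 ≤ m) (x y : Fin n → ℝ)
    (hxy : ∀ i, y i ≤ x i)
    (hne : (Finset.univ : Finset (Fin m)).Nonempty := ⟨⟨0, by omega⟩, Finset.mem_univ _⟩) :
    Dominates (lptSums (by omega : 0 < m) (List.ofFn x))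
        (lptSums (by omega : 0 < m) (List.ofFn y)) ∧
    Finset.univ.sup' hne (lptSums (by omega : 0 < m) (List.ofFn y)) ≤
      Finset.univ.sup' hne (lptSums (by omega : 0 < m) (List.ofFn x)) ∧
    Finset.univ.inf' hne (lptSums (by omega : 0 < m) (List.ofFn y)) ≤
      Finset.univ.inf' hne (lptSums (by omega : 0 < m) (List.ofFn x)) := by
  have h := dominates_lptSums (by omega : 0 < m) hxy
  exact ⟨h, h.sup'_le_sup' hne, h.inf'_le_inf' hne⟩
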